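/- Let (u_t)_{t=1}^T be IID with mean 0, variance σ_x² ≤ K, and E(u_t^4) ≤ K. Let x̃_t be the demeaned random walk built from (u_t). Then E[(T^{-1} ∑_{t=1}^T u_t x̃_t)²] ≤ C for a constant C depending only on K (not on T). -/

import Mathlib

open MeasureTheory ProbabilityTheory Finset

/-!
Expanding `x̃_t`, the statistic `T⁻¹ ∑ u_t x̃_t` is a quadratic form `∑_{t,s ≤ T} c_{ts} u_t u_s`
with `|c_{ts}| ≤ T⁻¹`. In the second moment of such a form, a fourth moment `E[u_a u_b u_c u_d]`
vanishes unless the four indices split into two equal pairs (an index occurring once contributes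
an independent centred factor). At most `3T²` quadruples are paired, and each of their moments is
at most `K` by AM-GM, so the second moment is at most `3K`.

When `u_t⁴` is not integrable, `∫ u_t⁴ = 0` and the fourth-moment hypothesis is void. Then for
`T ≥ 2` the statistic is not square integrable either, so its integral is `0` too: it equals
`α u_T² + L u_T + R` with `α ≠ 0` and `(L, R)` independent of `u_T`, and on an event
`{W(L, R) ≤ m}` of positive probability `u_T⁴` is dominated by its square.
-/

section QuadForm

variable {ι : Type*}

def quadForm (I : Finset ι) (c : ι → ι → ℝ) (v : ι → ℝ) : ℝ :=
  ∑ t ∈ I, ∑ s ∈ I, c t s * v t * v s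

lemma measurable_quadForm (I : Finset ι) (c : ι → ι → ℝ) : Measurable (quadForm I c) := by
  unfold quadForm; fun_prop

lemma quadForm_congr {I : Finset ι} (c : ι → ι → ℝ) {v w : ι → ℝ} (h : ∀ i ∈ I, v i = w i) :
    quadForm I c v = quadForm I c w :=
  sum_congr rfl fun t ht => sum_congr rfl fun s hs => by rw [h t ht, h s hs]

lemma quadForm_insert [DecidableEq ι] {S : Finset ι} {n : ι} (hn : n ∉ S) (c : ι → ι → ℝ)
    (v : ι → ℝ) :
    quadForm (insert n S) c v =
      c n n * v n ^ 2 + (∑ s ∈ S, (c n s + c s n) * v s) * v n + quadForm S c v := by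
  simp only [quadForm, sum_insert hn, add_mul, sum_add_distrib, sum_mul]
  ring_nf

lemma quadForm_sq (I : Finset ι) (c : ι → ι → ℝ) (v : ι → ℝ) :
    quadForm I c v ^ 2 = ∑ z ∈ (I ×ˢ I) ×ˢ (I ×ˢ I),
      c z.1.1 z.1.2 * c z.2.1 z.2.2 * (v z.1.1 * v z.1.2 * v z.2.1 * v z.2.2) := by
  rw [quadForm, ← sum_product', sq, sum_mul_sum, ← sum_product']
  exact sum_congr rfl fun z _ => by ring

def Paired (a b c d : ι) : Prop :=
  (a = b ∧ c = d) ∨ (a = c ∧ b = d) ∨ (a = d ∧ b = c)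

instance [DecidableEq ι] (a b c d : ι) : Decidable (Paired a b c d) :=
  inferInstanceAs (Decidable (_ ∨ _))

lemma card_filter_paired_le [DecidableEq ι] (I : Finset ι) :
    #{z ∈ (I ×ˢ I) ×ˢ (I ×ˢ I) | Paired z.1.1 z.1.2 z.2.1 z.2.2} ≤ 3 * #I ^ 2 := by
  have hsub : {z ∈ (I ×ˢ I) ×ˢ (I ×ˢ I) | Paired z.1.1 z.1.2 z.2.1 z.2.2} ⊆
      ((I ×ˢ I).image fun p => ((p.1, p.1), (p.2, p.2))) ∪ ((I ×ˢ I).image fun p => (p, p)) ∪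
        ((I ×ˢ I).image fun p => (p, p.swap)) := by
    rintro ⟨⟨a, b⟩, c, d⟩ hz
    obtain ⟨hz, hp⟩ := Finset.mem_filter.1 hz
    simp only [Paired] at hp
    obtain ⟨rfl, rfl⟩ | ⟨rfl, rfl⟩ | ⟨rfl, rfl⟩ := hp <;>
      simp only [mem_product] at hz <;> simp [hz]
  calc _ ≤ _ := card_le_card hsub
    _ ≤ #(I ×ˢ I) + #(I ×ˢ I) + #(I ×ˢ I) :=
      (card_union_le _ _).trans <| add_le_add ((card_union_le _ _).trans <|
        add_le_add card_image_le card_image_le) card_image_le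
    _ = 3 * #I ^ 2 := by rw [card_product]; ring

end QuadForm

lemma abs_mul_mul_mul_le (a b c d : ℝ) : |a * b * c * d| ≤ (a ^ 4 + b ^ 4 + c ^ 4 + d ^ 4) / 4 := by
  rw [abs_le]
  constructor <;> nlinarith [sq_nonneg (a * b - c * d), sq_nonneg (a * b + c * d),
    sq_nonneg (a ^ 2 - b ^ 2), sq_nonneg (c ^ 2 - d ^ 2)]

section Moments

variable {Ω ι : Type*} [MeasurableSpace Ω] {μ : Measure Ω} {u : ι → Ω → ℝ}

lemma ProbabilityTheory.iIndepFun.indepFun_comp_of_notMem {β : Type*} [MeasurableSpace β]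
    (hind : iIndepFun u μ) (hm : ∀ i, Measurable (u i)) {S : Finset ι} {j : ι} (hj : j ∉ S)
    {F : (ι → ℝ) → β} (hF : Measurable F) (hFS : ∀ v w, (∀ i ∈ S, v i = w i) → F v = F w) :
    IndepFun (fun ω => F fun i => u i ω) (u j) μ := by
  classical
  let extend : (S → ℝ) → ι → ℝ := fun w i => if h : i ∈ S then w ⟨i, h⟩ else 0
  have hextend : Measurable extend := measurable_pi_lambda _ fun i => by
    by_cases h : i ∈ S
    · simpa [extend, h] using measurable_pi_apply _
    · simp [extend, h]
  have hcomp : (fun ω => F fun i => u i ω) = (F ∘ extend) ∘ fun ω (i : S) => u i ω :=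
    funext fun ω => hFS _ _ fun i hi => by simp [extend, hi]
  rw [hcomp]
  exact (hind.indepFun_finset S {j} (disjoint_singleton_right.2 hj) hm).comp (hF.comp hextend)
    (measurable_pi_apply ⟨j, mem_singleton_self j⟩)

lemma integral_mul_mul_mul_eq_zero_of_not_paired [DecidableEq ι] (hind : iIndepFun u μ)
    (hm : ∀ i, Measurable (u i)) (hmean : ∀ i, ∫ ω, u i ω ∂μ = 0) {a b c d : ι}
    (h : ¬ Paired a b c d) : ∫ ω, u a ω * u b ω * u c ω * u d ω ∂μ = 0 := by
  have isolated : ∀ x y z w, x ≠ y → x ≠ z → x ≠ w →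
      ∫ ω, u x ω * (u y ω * u z ω * u w ω) ∂μ = 0 := by
    intro x y z w hy hz hw
    have hxyzw : IndepFun (u x) (fun ω => u y ω * u z ω * u w ω) μ :=
      (hind.indepFun_comp_of_notMem hm (S := {y, z, w}) (by simp [hy, hz, hw])
        (F := fun v => v y * v z * v w) (by fun_prop) fun v v' hv => by simp_all).symm
    rw [hxyzw.integral_fun_mul_eq_mul_integral (hm x).aestronglyMeasurable (by fun_prop),
      hmean, zero_mul]
  obtain ⟨hb, hc, hd⟩ | ⟨ha, hc, hd⟩ | ⟨ha, hb, hd⟩ | ⟨ha, hb, hc⟩ :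
      (a ≠ b ∧ a ≠ c ∧ a ≠ d) ∨ (b ≠ a ∧ b ≠ c ∧ b ≠ d) ∨ (c ≠ a ∧ c ≠ b ∧ c ≠ d) ∨
        (d ≠ a ∧ d ≠ b ∧ d ≠ c) := by
    unfold Paired at h; grind
  · rw [← isolated a b c d hb hc hd]; congr 1; ext; ring
  · rw [← isolated b a c d ha hc hd]; congr 1; ext; ring
  · rw [← isolated c a b d ha hb hd]; congr 1; ext; ring
  · rw [← isolated d a b c ha hb hc]; congr 1; ext; ring

section FourthMoments

variable (hm : ∀ i, Measurable (u i)) (h4 : ∀ i, Integrable (fun ω => u i ω ^ 4) μ)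
include hm h4

lemma integrable_mul_mul_mul (a b c d : ι) :
    Integrable (fun ω => u a ω * u b ω * u c ω * u d ω) μ :=
  Integrable.mono' (((((h4 a).add (h4 b)).add (h4 c)).add (h4 d)).div_const 4) (by fun_prop)
    (ae_of_all _ fun ω => abs_mul_mul_mul_le _ _ _ _)

lemma abs_integral_mul_mul_mul_le {K : ℝ} (hK : ∀ i, ∫ ω, u i ω ^ 4 ∂μ ≤ K) (a b c d : ι) :
    |∫ ω, u a ω * u b ω * u c ω * u d ω ∂μ| ≤ K := by
  calc _ ≤ ∫ ω, |u a ω * u b ω * u c ω * u d ω| ∂μ := abs_integral_le_integral_abs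
    _ ≤ ∫ ω, (u a ω ^ 4 + u b ω ^ 4 + u c ω ^ 4 + u d ω ^ 4) / 4 ∂μ :=
      integral_mono (integrable_mul_mul_mul hm h4 a b c d).abs
        (((((h4 a).add (h4 b)).add (h4 c)).add (h4 d)).div_const 4)
        fun ω => abs_mul_mul_mul_le _ _ _ _
    _ = ((∫ ω, u a ω ^ 4 ∂μ) + (∫ ω, u b ω ^ 4 ∂μ) + (∫ ω, u c ω ^ 4 ∂μ) +
          ∫ ω, u d ω ^ 4 ∂μ) / 4 := by
      rw [integral_div, integral_add (by fun_prop) (h4 d), integral_add (by fun_prop) (h4 c),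
        integral_add (h4 a) (h4 b)]
    _ ≤ K := by linarith [hK a, hK b, hK c, hK d]

theorem integral_sq_quadForm_le [DecidableEq ι] (hind : iIndepFun u μ)
    (hmean : ∀ i, ∫ ω, u i ω ∂μ = 0) {K : ℝ} (hK : ∀ i, ∫ ω, u i ω ^ 4 ∂μ ≤ K) (I : Finset ι)
    (c : ι → ι → ℝ) {B : ℝ} (hc : ∀ t ∈ I, ∀ s ∈ I, |c t s| ≤ B) :
    ∫ ω, quadForm I c (fun i => u i ω) ^ 2 ∂μ ≤ 3 * #I ^ 2 * B ^ 2 * K := by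
  rcases I.eq_empty_or_nonempty with rfl | ⟨i₀, hi₀⟩
  · simp [quadForm]
  have hK₀ : 0 ≤ K := (integral_nonneg fun ω => by positivity).trans (hK i₀)
  have hB : 0 ≤ B := (abs_nonneg _).trans (hc i₀ hi₀ i₀ hi₀)
  simp_rw [quadForm_sq]
  rw [integral_finsetSum _ fun z _ => (integrable_mul_mul_mul hm h4 _ _ _ _).const_mul _]
  simp_rw [integral_const_mul]
  rw [← sum_filter_of_ne fun z _ hz => by_contra fun hP => hz <| by
    rw [integral_mul_mul_mul_eq_zero_of_not_paired hind hm hmean hP, mul_zero]]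
  calc _ ≤ ∑ z ∈ (I ×ˢ I) ×ˢ (I ×ˢ I) with Paired z.1.1 z.1.2 z.2.1 z.2.2, B * B * K := by
        refine sum_le_sum fun z hz => ?_
        simp only [Finset.mem_filter, mem_product] at hz
        calc _ ≤ |c z.1.1 z.1.2| * |c z.2.1 z.2.2| *
              |∫ ω, u z.1.1 ω * u z.1.2 ω * u z.2.1 ω * u z.2.2 ω ∂μ| := by
              rw [← abs_mul, ← abs_mul]; exact le_abs_self _
          _ ≤ B * B * K := by
              gcongr
              exacts [hc _ hz.1.1.1 _ hz.1.1.2, hc _ hz.1.2.1 _ hz.1.2.2,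
                abs_integral_mul_mul_mul_le hm h4 hK _ _ _ _]
    _ ≤ 3 * #I ^ 2 * (B * B * K) := by
        rw [sum_const, nsmul_eq_mul]
        gcongr
        exact_mod_cast card_filter_paired_le I
    _ = 3 * #I ^ 2 * B ^ 2 * K := by ring

end FourthMoments

lemma integrable_pow_four_of_integrable_sq_quadratic [IsFiniteMeasure μ] {X L R : Ω → ℝ} {α : ℝ}
    (hα : α ≠ 0) (hX : Measurable X) (hL : Measurable L) (hR : Measurable R)
    (hind : IndepFun (fun ω => (L ω, R ω)) X μ)
    (hQ : Integrable (fun ω => (α * X ω ^ 2 + L ω * X ω + R ω) ^ 2) μ) :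
    Integrable (fun ω => X ω ^ 4) μ := by
  rcases eq_zero_or_neZero μ with rfl | _
  · exact integrable_zero_measure
  let W : ℝ × ℝ → ℝ := fun p => 6 * α ^ 2 * p.2 ^ 2 + 9 * p.1 ^ 4
  have hW : Measurable W := by fun_prop
  have hX4 : ∀ ω, α ^ 4 * X ω ^ 4 ≤
      6 * α ^ 2 * (α * X ω ^ 2 + L ω * X ω + R ω) ^ 2 + W (L ω, R ω) := fun ω => by
    nlinarith [sq_nonneg (α ^ 2 * X ω ^ 2 - 3 * L ω ^ 2),
      sq_nonneg (α * (L ω * X ω) - α * R ω),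
      sq_nonneg (α * (α * X ω ^ 2 + L ω * X ω + R ω) + α * (L ω * X ω)),
      sq_nonneg (α * (α * X ω ^ 2 + L ω * X ω + R ω) + α * R ω)]
  -- on a level set `{W (L, R) ≤ m}` of positive measure, `X ^ 4` is dominated by `Q ^ 2`
  obtain ⟨m, hpos⟩ : ∃ m : ℕ, μ {ω | W (L ω, R ω) ≤ m} ≠ 0 := by
    by_contra! h
    have hunion := measure_iUnion_null h
    rw [Set.iUnion_eq_univ_iff.2 fun ω => ⟨⌈W (L ω, R ω)⌉₊, Nat.le_ceil (W (L ω, R ω))⟩,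
      Measure.measure_univ_eq_zero] at hunion
    exact NeZero.ne μ hunion
  let χ : ℝ × ℝ → ℝ := {p | W p ≤ m}.indicator 1
  have hχ : Measurable χ := measurable_one.indicator (measurableSet_le hW measurable_const)
  have hα4 : 0 < α ^ 4 := by positivity
  have hbound : Integrable (fun ω => χ (L ω, R ω) * X ω ^ 4) μ := by
    refine Integrable.mono' (((hQ.const_mul (6 * α ^ 2)).add (integrable_const (m : ℝ))).div_const
      (α ^ 4)) ((hχ.comp (hL.prodMk hR)).mul (hX.pow_const 4)).aestronglyMeasurable
      (ae_of_all _ fun ω => ?_)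
    rw [Pi.add_apply]
    by_cases hω : W (L ω, R ω) ≤ m
    · simp only [χ, Set.indicator_of_mem (show (L ω, R ω) ∈ {p | W p ≤ m} from hω), Pi.one_apply,
        one_mul, Real.norm_eq_abs, abs_of_nonneg (by positivity : 0 ≤ X ω ^ 4)]
      rw [le_div_iff₀ hα4]
      linarith [hX4 ω]
    · simp only [χ, Set.indicator_of_notMem (show (L ω, R ω) ∉ {p | W p ≤ m} from hω), zero_mul,
        norm_zero]
      positivity
  refine (hind.comp hχ (measurable_id.pow_const 4)).integrable_right_of_integrable_op (· * ·) 1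
    one_ne_zero (fun x y => by simp [enorm_mul]) hbound
    (hχ.comp (hL.prodMk hR)).aestronglyMeasurable (hX.pow_const 4).aestronglyMeasurable
    fun h0 => hpos ?_
  rw [measure_eq_zero_iff_ae_notMem]
  filter_upwards [h0] with ω hω hmem
  simp only [χ, Function.comp_apply, Pi.zero_apply,
    Set.indicator_of_mem (show (L ω, R ω) ∈ {p | W p ≤ m} from hmem), Pi.one_apply] at hω
  exact one_ne_zero hω

theorem integrable_pow_four_of_integrable_sq_quadForm [IsFiniteMeasure μ] [DecidableEq ι]
    (hind : iIndepFun u μ) (hm : ∀ i, Measurable (u i)) {S : Finset ι} {n : ι} (hn : n ∉ S)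
    {c : ι → ι → ℝ} (hc : c n n ≠ 0)
    (hQ : Integrable (fun ω => quadForm (insert n S) c (fun i => u i ω) ^ 2) μ) :
    Integrable (fun ω => u n ω ^ 4) μ := by
  simp_rw [quadForm_insert hn] at hQ
  have hu : Measurable fun ω i => u i ω := measurable_pi_lambda _ hm
  refine integrable_pow_four_of_integrable_sq_quadratic hc (hm n) (by fun_prop)
    ((measurable_quadForm S c).comp hu) ?_ hQ
  exact hind.indepFun_comp_of_notMem hm hn
    (F := fun v => (∑ s ∈ S, (c n s + c s n) * v s, quadForm S c v))
    ((by fun_prop : Measurable fun v : ι → ℝ => ∑ s ∈ S, (c n s + c s n) * v s).prodMk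
      (measurable_quadForm S c))
    fun v w h => by rw [sum_congr rfl fun s hs => by rw [h s hs], quadForm_congr c h]

end Moments

section DemeanedWalk

noncomputable def demeanedWalk (T : ℕ) (v : ℕ → ℝ) (t : ℕ) : ℝ :=
  ∑ s ∈ Icc 1 t, v s - (T : ℝ)⁻¹ * ∑ r ∈ Icc 1 T, ∑ s ∈ Icc 1 r, v s

noncomputable def crossMean (T : ℕ) (v : ℕ → ℝ) : ℝ :=
  (T : ℝ)⁻¹ * ∑ t ∈ Icc 1 T, v t * demeanedWalk T v t

-- `T + 1 - s` is the number of partial sums `∑_{s' ≤ r} v s'`, `r ≤ T`, containing `v s`.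
noncomputable def walkCoef (T t s : ℕ) : ℝ :=
  (T : ℝ)⁻¹ * ((if s ≤ t then 1 else 0) - (T : ℝ)⁻¹ * ((T : ℝ) + 1 - s))

lemma sum_Icc_sum_Icc_eq_sum_mul (T : ℕ) (v : ℕ → ℝ) :
    ∑ r ∈ Icc 1 T, ∑ s ∈ Icc 1 r, v s = ∑ s ∈ Icc 1 T, ((T : ℝ) + 1 - s) * v s := by
  rw [sum_comm' (t' := Icc 1 T) (s' := fun s => Icc s T) fun r s => by simp only [mem_Icc]; omega]
  refine sum_congr rfl fun s hs => ?_
  rw [sum_const, Nat.card_Icc, nsmul_eq_mul, Nat.cast_sub (by simp at hs; omega)]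
  push_cast; ring

lemma sum_Icc_eq_sum_ite {T t : ℕ} (ht : t ≤ T) (v : ℕ → ℝ) :
    ∑ s ∈ Icc 1 t, v s = ∑ s ∈ Icc 1 T, (if s ≤ t then 1 else 0) * v s := by
  simp only [ite_mul, one_mul, zero_mul, ← sum_filter]
  exact sum_congr (by ext s; simp only [mem_Icc, Finset.mem_filter]; omega) fun _ _ => rfl

lemma crossMean_eq_quadForm (T : ℕ) (v : ℕ → ℝ) :
    crossMean T v = quadForm (Icc 1 T) (walkCoef T) v := by
  rw [crossMean, quadForm, mul_sum]
  refine sum_congr rfl fun t ht => ?_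
  rw [demeanedWalk, sum_Icc_sum_Icc_eq_sum_mul, sum_Icc_eq_sum_ite (mem_Icc.1 ht).2, mul_sum,
    ← sum_sub_distrib, mul_sum, mul_sum]
  exact sum_congr rfl fun s _ => by rw [walkCoef]; ring

lemma abs_walkCoef_le {T : ℕ} (t : ℕ) {s : ℕ} (hs : s ∈ Icc 1 T) :
    |walkCoef T t s| ≤ (T : ℝ)⁻¹ := by
  obtain ⟨hs1, hsT⟩ := mem_Icc.1 hs
  have hT : (0 : ℝ) < T := by exact_mod_cast hs1.trans hsT
  have hs1' : (1 : ℝ) ≤ s := by exact_mod_cast hs1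
  have hsT' : (s : ℝ) ≤ T := by exact_mod_cast hsT
  have hfrac : (T : ℝ)⁻¹ * ((T : ℝ) + 1 - s) ∈ Set.Icc 0 1 := by
    constructor
    · exact mul_nonneg (by positivity) (by linarith)
    · rw [inv_mul_le_one₀ hT]; linarith
  rw [walkCoef, abs_mul, abs_of_pos (inv_pos.2 hT)]
  refine mul_le_of_le_one_right (by positivity) (abs_le.2 ⟨?_, ?_⟩) <;>
    split_ifs <;> linarith [hfrac.1, hfrac.2]

lemma walkCoef_self_ne_zero {T : ℕ} (hT : 2 ≤ T) : walkCoef T T T ≠ 0 := by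
  have hT' : (2 : ℝ) ≤ T := by exact_mod_cast hT
  rw [walkCoef, if_pos le_rfl, add_sub_cancel_left, mul_one]
  exact mul_ne_zero (by positivity) (sub_ne_zero.2 (by
    rw [ne_comm, inv_ne_one]; linarith))

end DemeanedWalk

theorem stmt_13_general (K : ℝ) :
    ∃ C : ℝ, ∀ (T : ℕ), 0 < T →
      ∀ (Ω : Type) [MeasureSpace Ω] [IsProbabilityMeasure (ℙ : Measure Ω)]
        (u : ℕ → Ω → ℝ) (σx : ℝ),
        (∀ t, Measurable (u t)) →
        iIndepFun u ℙ →
        (∀ s t, IdentDistrib (u s) (u t) ℙ ℙ) →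
        (∀ t, ∫ ω, u t ω = 0) →
        (∀ t, ∫ ω, (u t ω) ^ 2 = σx ^ 2) → σx ^ 2 ≤ K →
        (∀ t, ∫ ω, (u t ω) ^ 4 ≤ K) →
        (∫ ω, ((T : ℝ)⁻¹ * ∑ t ∈ Finset.Icc 1 T, u t ω *
            ((∑ s ∈ Finset.Icc 1 t, u s ω)
              - (T : ℝ)⁻¹ * ∑ r ∈ Finset.Icc 1 T, ∑ s ∈ Finset.Icc 1 r, u s ω)) ^ 2) ≤ C := by
  refine ⟨3 * K, fun T hT Ω _ _ u σx hm hind hid hmean _ _ h4 => ?_⟩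
  have hK : 0 ≤ K := (integral_nonneg fun ω => by positivity).trans (h4 0)
  change ∫ ω, crossMean T (fun s => u s ω) ^ 2 ≤ 3 * K
  by_cases hQ : Integrable fun ω => crossMean T (fun s => u s ω) ^ 2
  swap
  · rw [integral_undef hQ]; positivity
  obtain rfl | hT2 : T = 1 ∨ 2 ≤ T := by omega
  · simp [crossMean, demeanedWalk]; positivity
  obtain ⟨n, rfl⟩ : ∃ n, T = n + 1 := ⟨T - 1, by omega⟩
  simp_rw [crossMean_eq_quadForm] at hQ ⊢
  rw [← insert_Icc_right_eq_Icc_add_one (by omega)] at hQ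
  have hu4 : Integrable fun ω => u (n + 1) ω ^ 4 :=
    integrable_pow_four_of_integrable_sq_quadForm hind hm (by simp) (walkCoef_self_ne_zero hT2) hQ
  have h4int : ∀ t, Integrable fun ω => u t ω ^ 4 := fun t =>
    ((hid (n + 1) t).comp (measurable_id.pow_const 4)).integrable_iff.1 hu4
  calc _ ≤ 3 * #(Icc 1 (n + 1)) ^ 2 * ((n + 1 : ℕ) : ℝ)⁻¹ ^ 2 * K :=
        integral_sq_quadForm_le hm h4int hind hmean h4 _ _ fun t _ s hs => abs_walkCoef_le t hs
    _ = 3 * K := by rw [Nat.card_Icc, add_tsub_cancel_right]; field_simp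

/-- Uniform second-moment bound: for IID mean-zero `(u_t)` with variance `σ_x² ≤ K` and fourth
moments `≤ K`, `E[(T⁻¹ ∑_{t=1}^T u_t x̃_t)²] ≤ C` with `C` depending only on `K`, not on `T`. -/
theorem stmt_13 (K : ℝ) (hK : 0 < K) :
    ∃ C : ℝ, ∀ (T : ℕ), 0 < T →
      ∀ (Ω : Type) [MeasureSpace Ω] [IsProbabilityMeasure (ℙ : Measure Ω)]
        (u : ℕ → Ω → ℝ) (σx : ℝ),
        (∀ t, Measurable (u t)) →
        iIndepFun u ℙ →
        (∀ s t, IdentDistrib (u s) (u t) ℙ ℙ) →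
        (∀ t, ∫ ω, u t ω = 0) →
        (∀ t, ∫ ω, (u t ω) ^ 2 = σx ^ 2) → σx ^ 2 ≤ K →
        (∀ t, ∫ ω, (u t ω) ^ 4 ≤ K) →
        (∫ ω, ((T : ℝ)⁻¹ * ∑ t ∈ Finset.Icc 1 T, u t ω *
            ((∑ s ∈ Finset.Icc 1 t, u s ω)
              - (T : ℝ)⁻¹ * ∑ r ∈ Finset.Icc 1 T, ∑ s ∈ Finset.Icc 1 r, u s ω)) ^ 2) ≤ C :=
  stmt_13_general K
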